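/- Let Φ : (S,·) → (T,·) be a semigroup homomorphism such that Φ(S) is a J-set in T. If A ⊆ S is a J-set in S, then Φ(A) is a J-set in T. -/

import Mathlib

/-- Left fold of multiplication: `mulList x [y₁,…,yₙ] = x * y₁ * ⋯ * yₙ` (product taken
in order; no identity element needed). -/
def mulList {T : Type*} [Mul T] : T → List T → T
  | x, [] => x
  | x, y :: l => mulList (x * y) l

/-- For `m ≥ 1` (here the paper's `m` is `m + 1`), `a ∈ T^{m+2}` (the paper's
`a ∈ T^{(m+1)+1}`), a strictly increasing `t ∈ ℕ^{m+1}` and `f : ℕ → T`, this is the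
ordered product `x(m,a,t,f) = (∏_{j=1}^{m+1} a(j)·f(t(j))) · a(m+2)`. -/
def xProd {T : Type*} [Mul T] (m : ℕ) (a : Fin (m + 2) → T) (t : Fin (m + 1) → ℕ)
    (f : ℕ → T) : T :=
  mulList (a 0 * f (t 0))
    ((List.ofFn fun j : Fin m => a j.succ.castSucc * f (t j.succ)) ++ [a (Fin.last (m + 1))])

/-- A subset `A` of a semigroup `T` is a *J-set* if for every finite nonempty set `F` of
sequences `f : ℕ → T` there exist `m`, `a ∈ T^{m+1}` and strictly increasing
`t(1) < ⋯ < t(m)` in `ℕ` such that `x(m,a,t,f) ∈ A` for every `f ∈ F`. -/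
def MulJSet {T : Type*} [Mul T] (A : Set T) : Prop :=
  ∀ F : Finset (ℕ → T), F.Nonempty →
    ∃ (m : ℕ) (a : Fin (m + 2) → T) (t : Fin (m + 1) → ℕ),
      StrictMono t ∧ ∀ f ∈ F, xProd m a t f ∈ A

/-!
Applying the J-set property of `Φ(S)` to the shifted sequences `k ↦ f (k + N)` gives J-products
with all times `≥ N`. Iterating, we get blocks `W n`, J-products `f ↦ x(mₙ, aₙ, tₙ, f)` with times
in consecutive intervals `[b n, b (n + 1))`, whose values at each `f ∈ F` lie in `Φ(S)`, say
`W n f = Φ (g_f n)`. The J-set property of `A`, applied to the finitely many `g_f`, gives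
`x(p, c, s, g_f) ∈ A`, whose image is `x(p, Φ ∘ c, s, n ↦ W n f)`. Substituting the blocks for the
`f (s j)` and merging adjacent coefficients turns this into a single J-product in `f`, with
increasing times because the blocks are used in increasing order.
-/

theorem Fin.strictMono_snoc {α : Type*} [Preorder α] {m : ℕ} {t : Fin (m + 1) → α} {x : α}
    (ht : StrictMono t) (hx : t (Fin.last m) < x) :
    StrictMono (Fin.snoc t x : Fin (m + 2) → α) := by
  rw [Fin.strictMono_iff_lt_succ, Fin.forall_fin_succ']
  refine ⟨fun i => ?_, by simpa using hx⟩
  rw [Fin.snoc_castSucc, Fin.succ_castSucc, Fin.snoc_castSucc]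
  exact ht Fin.castSucc_lt_succ

section mulList

variable {S T : Type*}

theorem mulList_append_singleton [Mul T] (x y : T) (l : List T) :
    mulList x (l ++ [y]) = mulList x l * y := by
  induction l generalizing x with
  | nil => rfl
  | cons z l ih => exact ih (x * z)

theorem mul_mulList [Semigroup T] (x y : T) (l : List T) :
    x * mulList y l = mulList (x * y) l := by
  induction l generalizing y with
  | nil => rfl
  | cons z l ih => simp only [mulList, ih, mul_assoc]

theorem map_mulList [Mul S] [Mul T] (φ : S →ₙ* T) (x : S) (l : List S) :
    φ (mulList x l) = mulList (φ x) (l.map φ) := by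
  induction l generalizing x with
  | nil => rfl
  | cons z l ih => simp only [mulList, ih, map_mul, List.map_cons]

end mulList

section xProd

variable {S T : Type*}

theorem xProd_zero [Mul T] (a : Fin 2 → T) (t : Fin 1 → ℕ) (f : ℕ → T) :
    xProd 0 a t f = a 0 * f (t 0) * a 1 := rfl

theorem xProd_succ [Semigroup T] (m : ℕ) (a : Fin (m + 3) → T) (t : Fin (m + 2) → ℕ)
    (f : ℕ → T) :
    xProd (m + 1) a t f =
      xProd m (Fin.init a) (Fin.init t) f * f (t (Fin.last _)) * a (Fin.last _) := by
  simp only [xProd, List.ofFn_succ' (n := m), List.concat_eq_append, mulList_append_singleton,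
    Fin.init, mul_assoc]
  rfl

theorem xProd_snoc [Semigroup T] (m : ℕ) (a : Fin (m + 2) → T) (t : Fin (m + 1) → ℕ)
    (f : ℕ → T) (x : T) (n : ℕ) :
    xProd (m + 1) (Fin.snoc a x) (Fin.snoc t n) f = xProd m a t f * f n * x := by
  simp [xProd_succ]

theorem mul_xProd [Semigroup T] (m : ℕ) (a : Fin (m + 2) → T) (t : Fin (m + 1) → ℕ)
    (f : ℕ → T) (x : T) :
    x * xProd m a t f = xProd m (Function.update a 0 (x * a 0)) t f := by
  simp [xProd, mul_mulList, mul_assoc, Fin.succ_ne_zero]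

theorem xProd_mul [Semigroup T] (m : ℕ) (a : Fin (m + 2) → T) (t : Fin (m + 1) → ℕ)
    (f : ℕ → T) (x : T) :
    xProd m a t f * x =
      xProd m (Function.update a (Fin.last _) (a (Fin.last _) * x)) t f := by
  simp [xProd, mulList_append_singleton, mul_assoc]

theorem map_xProd [Mul S] [Mul T] (φ : S →ₙ* T) (m : ℕ) (a : Fin (m + 2) → S)
    (t : Fin (m + 1) → ℕ) (f : ℕ → S) :
    φ (xProd m a t f) = xProd m (φ ∘ a) t (φ ∘ f) := by
  simp [xProd, map_mulList, List.map_ofFn, Function.comp_def]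

end xProd

/-- `w` is a J-product `f ↦ x(m, a, t, f)` all of whose times `t j` lie in `[lo, hi)`. -/
def IsXProdOn {T : Type*} [Mul T] (lo hi : ℕ) (w : (ℕ → T) → T) : Prop :=
  ∃ (m : ℕ) (a : Fin (m + 2) → T) (t : Fin (m + 1) → ℕ),
    StrictMono t ∧ lo ≤ t 0 ∧ t (Fin.last m) < hi ∧ w = xProd m a t

namespace IsXProdOn

variable {T : Type*} {lo hi : ℕ} {w : (ℕ → T) → T}

theorem lt [Mul T] (hw : IsXProdOn lo hi w) : lo < hi := by
  obtain ⟨m, a, t, ht, hlo, hhi, -⟩ := hw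
  exact hlo.trans_lt ((ht.monotone (Fin.zero_le _)).trans_lt hhi)

variable [Semigroup T]

theorem const_mul (hw : IsXProdOn lo hi w) (x : T) : IsXProdOn lo hi fun f => x * w f := by
  obtain ⟨m, a, t, ht, hlo, hhi, rfl⟩ := hw
  exact ⟨m, _, t, ht, hlo, hhi, funext fun f => mul_xProd m a t f x⟩

theorem mul_const (hw : IsXProdOn lo hi w) (x : T) : IsXProdOn lo hi fun f => w f * x := by
  obtain ⟨m, a, t, ht, hlo, hhi, rfl⟩ := hw
  exact ⟨m, _, t, ht, hlo, hhi, funext fun f => xProd_mul m a t f x⟩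

theorem snoc (hw : IsXProdOn lo hi w) {n : ℕ} (hn : hi ≤ n) (x : T) :
    IsXProdOn lo (n + 1) fun f => w f * f n * x := by
  obtain ⟨m, a, t, ht, hlo, hhi, rfl⟩ := hw
  refine ⟨m + 1, Fin.snoc a x, Fin.snoc t n, Fin.strictMono_snoc ht (hhi.trans_le hn),
    by simpa using hlo, by simp, funext fun f => (xProd_snoc m a t f x n).symm⟩

theorem mul_xProd (hw : IsXProdOn lo hi w) {m : ℕ} (a : Fin (m + 2) → T)
    {t : Fin (m + 1) → ℕ} (ht : StrictMono t) (hlo : hi ≤ t 0) :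
    IsXProdOn lo (t (Fin.last m) + 1) fun f => w f * xProd m a t f := by
  induction m generalizing hi with
  | zero =>
    simpa only [xProd_zero, ← mul_assoc, Fin.last_zero] using
      (hw.mul_const (a 0)).snoc hlo (a 1)
  | succ m ih =>
    have hinit := ih hw (Fin.init a) (t := Fin.init t) (ht.comp Fin.strictMono_castSucc) hlo
    simpa only [xProd_succ, ← mul_assoc] using
      hinit.snoc (ht (Fin.castSucc_lt_last _)) (a (Fin.last _))

theorem mul {lo' hi' : ℕ} {w' : (ℕ → T) → T} (hw : IsXProdOn lo hi w)
    (hw' : IsXProdOn lo' hi' w') (h : hi ≤ lo') : IsXProdOn lo hi' fun f => w f * w' f := by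
  obtain ⟨m, a, t, ht, hlo, hhi, rfl⟩ := hw'
  obtain ⟨m', a', t', ht', hlo', hhi', heq⟩ := hw.mul_xProd a ht (h.trans hlo)
  exact ⟨m', a', t', ht', hlo', hhi'.trans_le hhi, heq⟩

end IsXProdOn

theorem MulJSet.exists_isXProdOn {T : Type*} [Mul T] {B : Set T} (hB : MulJSet B)
    {F : Finset (ℕ → T)} (hF : F.Nonempty) (N : ℕ) :
    ∃ hi w, IsXProdOn N hi w ∧ ∀ f ∈ F, w f ∈ B := by
  classical
  obtain ⟨m, a, t, ht, hx⟩ := hB (F.image fun f k => f (k + N)) (hF.image _)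
  exact ⟨t (Fin.last m) + N + 1, xProd m a (fun j => t j + N),
    ⟨m, a, _, ht.add_const N, Nat.le_add_left _ _, Nat.lt_succ_self _, rfl⟩,
    fun f hf => hx _ (Finset.mem_image_of_mem _ hf)⟩

theorem isXProdOn_xProd_blocks {T : Type*} [Semigroup T] {W : ℕ → (ℕ → T) → T} {b : ℕ → ℕ}
    (hb : Monotone b) (hW : ∀ n, IsXProdOn (b n) (b (n + 1)) (W n)) (p : ℕ)
    (c : Fin (p + 2) → T) {s : Fin (p + 1) → ℕ} (hs : StrictMono s) :
    IsXProdOn (b (s 0)) (b (s (Fin.last p) + 1)) fun f => xProd p c s fun n => W n f := by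
  induction p with
  | zero =>
    simpa only [xProd_zero, Fin.last_zero] using ((hW (s 0)).const_mul (c 0)).mul_const (c 1)
  | succ p ih =>
    have hinit := ih (Fin.init c) (s := Fin.init s) (hs.comp Fin.strictMono_castSucc)
    have hlast := hW (s (Fin.last _))
    simpa only [xProd_succ, Fin.init, Fin.castSucc_zero] using
      ((hinit.mul hlast (hb (hs (Fin.castSucc_lt_last _)))).mul_const (c (Fin.last _)))

/-- If `Φ : S → T` is a semigroup homomorphism such that `Φ(S)` is a J-set in `T`, and
`A ⊆ S` is a J-set in `S`, then `Φ(A)` is a J-set in `T`. -/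
theorem mulJSet_image_of_mulJSet {S T : Type*} [Semigroup S] [Semigroup T] (Φ : S → T)
    (hΦ : ∀ x y : S, Φ (x * y) = Φ x * Φ y)
    (hrange : MulJSet (Set.range Φ))
    (A : Set S) (hA : MulJSet A) : MulJSet (Φ '' A) := by
  intro F hF
  choose hi W hW hWF using hrange.exists_isXProdOn hF
  set b : ℕ → ℕ := fun n => hi^[n] 0 with hb_def
  have hblocks : ∀ n, IsXProdOn (b n) (b (n + 1)) (W (b n)) := fun n => by
    simpa only [hb_def, Function.iterate_succ_apply'] using hW (b n)
  have hb : Monotone b := monotone_nat_of_le_succ fun n => (hblocks n).lt.le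
  choose g hg using fun (f : F) n => hWF (b n) f f.2
  have := hF.to_subtype
  classical
  obtain ⟨p, c, s, hs, hcA⟩ := hA (Finset.univ.image g) (Finset.univ_nonempty.image g)
  obtain ⟨m, a, t, ht, -, -, hw⟩ := isXProdOn_xProd_blocks hb hblocks p (Φ ∘ c) hs
  refine ⟨m, a, t, ht, fun f hf => ⟨xProd p c s (g ⟨f, hf⟩),
    hcA _ (Finset.mem_image_of_mem g (Finset.mem_univ _)), ?_⟩⟩
  rw [← hw]
  exact (map_xProd ⟨Φ, hΦ⟩ p c s _).trans (congrArg _ (funext (hg ⟨f, hf⟩)))
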